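/- In the setting where delta(J) = dim(gamma + sum_{j in J} kappa_j) - |J| for polytopes, with min_J delta(J) = 0 and J_0 the maximal element of {J : delta(J)=0}: for any J with delta(J) = 1, either J ⊆ J_0, or J is contained in exactly one maximal element of the set {J' : delta(J') = 1, J_0 ⊆ J'}. -/

import Mathlib

open scoped Pointwise

/-- A polytope: the convex hull of a nonempty finite set of points. -/
def IsPolytope {V : Type*} [AddCommGroup V] [Module ℝ V] (P : Set V) : Prop :=
  ∃ s : Finset V, s.Nonempty ∧ P = convexHull ℝ (s : Set V)

/-- The dimension of (the affine span of) a subset of a real vector space. -/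
noncomputable def polyDim {V : Type*} [AddCommGroup V] [Module ℝ V] (P : Set V) : ℕ :=
  Module.finrank ℝ (affineSpan ℝ P).direction

/-- `δ(J) = dim(γ + ∑_{j ∈ J} κ_j) - |J|`. -/
noncomputable def deltaFn {V : Type*} [AddCommGroup V] [Module ℝ V] {m : ℕ}
    (γ : Set V) (κ : Fin m → Set V) (J : Finset (Fin m)) : ℤ :=
  (polyDim (γ + ∑ j ∈ J, κ j) : ℤ) - J.card

/-!
The dimension of `γ + ∑_{j ∈ J} κ_j` is that of the sum of the direction spaces of `γ` and the
`κ_j`, so the modular law for subspace dimensions makes `δ` submodular. Every zero of `δ` lies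
below `J₀`, hence `δ ≥ 1` on all supersets of a `J ⊄ J₀`. Submodularity then shows that the sets
`K ⊇ J ∪ J₀` with `δ(K) = 1` are closed under union; `J ∪ J₀` is one of them, so they have a
largest element, and it is the unique maximal element of `{J' : δ(J') = 1, J₀ ⊆ J'}` above `J`.
-/

open Finset Module

theorem Set.nonempty_finset_sum {ι M : Type*} [AddCommMonoid M] (s : Finset ι) {κ : ι → Set M}
    (hκ : ∀ j, (κ j).Nonempty) : (∑ j ∈ s, κ j).Nonempty :=
  Finset.sum_induction _ _ (fun _ _ => Set.Nonempty.add) Set.zero_nonempty fun j _ => hκ j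

section VectorSpan

variable {k V : Type*} [Ring k] [AddCommGroup V] [Module k V]

theorem vectorSpan_add {A B : Set V} (hA : A.Nonempty) (hB : B.Nonempty) :
    vectorSpan k (A + B) = vectorSpan k A ⊔ vectorSpan k B := by
  obtain ⟨a, ha⟩ := hA
  obtain ⟨b, hb⟩ := hB
  refine le_antisymm ?_ (sup_le ?_ ?_)
  · rw [vectorSpan_def, Submodule.span_le]
    rintro _ ⟨_, ⟨a₁, ha₁, b₁, hb₁, rfl⟩, _, ⟨a₂, ha₂, b₂, hb₂, rfl⟩, rfl⟩
    change a₁ + b₁ - (a₂ + b₂) ∈ (_ : Set V)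
    rw [add_sub_add_comm]
    exact Submodule.add_mem_sup (vsub_mem_vectorSpan k ha₁ ha₂) (vsub_mem_vectorSpan k hb₁ hb₂)
  · rw [← vectorSpan_vadd k A b]
    refine vectorSpan_mono k ?_
    rintro _ ⟨a', ha', rfl⟩
    change b + a' ∈ A + B
    exact add_comm a' b ▸ Set.add_mem_add ha' hb
  · rw [← vectorSpan_vadd k B a]
    refine vectorSpan_mono k ?_
    rintro _ ⟨b', hb', rfl⟩
    exact Set.add_mem_add ha hb'

theorem vectorSpan_finset_sum {ι : Type*} (s : Finset ι) {κ : ι → Set V}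
    (hκ : ∀ j, (κ j).Nonempty) :
    vectorSpan k (∑ j ∈ s, κ j) = s.sup fun j => vectorSpan k (κ j) := by
  induction s using Finset.cons_induction with
  | empty => simp [← Set.singleton_zero]
  | cons j s _ ih =>
    rw [sum_cons, sup_cons, vectorSpan_add (hκ j) (Set.nonempty_finset_sum s hκ), ih]

end VectorSpan

theorem finrank_add_finrank_sup_le_of_le_inf {K V : Type*} [DivisionRing K] [AddCommGroup V]
    [Module K V] {U₁ U₂ U₃ : Submodule K V} [FiniteDimensional K U₁] [FiniteDimensional K U₂]
    (h : U₃ ≤ U₁ ⊓ U₂) :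
    finrank K U₃ + finrank K ↥(U₁ ⊔ U₂) ≤ finrank K U₁ + finrank K U₂ := by
  have := Submodule.finrank_mono h
  have := Submodule.finrank_sup_add_finrank_inf_eq U₁ U₂
  omega

section Polytope

variable {V : Type*} [AddCommGroup V] [Module ℝ V]

theorem IsPolytope.nonempty {P : Set V} (hP : IsPolytope P) : P.Nonempty := by
  obtain ⟨s, hs, rfl⟩ := hP
  exact hs.to_set.mono (subset_convexHull ℝ _)

theorem IsPolytope.finiteDimensional_vectorSpan {P : Set V} (hP : IsPolytope P) :
    FiniteDimensional ℝ (vectorSpan ℝ P) := by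
  obtain ⟨s, -, rfl⟩ := hP
  rw [← direction_affineSpan, affineSpan_convexHull, direction_affineSpan]
  exact finiteDimensional_vectorSpan_of_finite ℝ s.finite_toSet

theorem deltaFn_submodular {m : ℕ} {γ : Set V} {κ : Fin m → Set V} (hγ : IsPolytope γ)
    (hκ : ∀ j, IsPolytope (κ j)) (I J : Finset (Fin m)) :
    deltaFn γ κ (I ∩ J) + deltaFn γ κ (I ∪ J) ≤ deltaFn γ κ I + deltaFn γ κ J := by
  have := hγ.finiteDimensional_vectorSpan
  have := fun j => (hκ j).finiteDimensional_vectorSpan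
  let U (I : Finset (Fin m)) := vectorSpan ℝ γ ⊔ I.sup fun j => vectorSpan ℝ (κ j)
  have hdim (I : Finset (Fin m)) : polyDim (γ + ∑ j ∈ I, κ j) = finrank ℝ (U I) := by
    have hκ' j := (hκ j).nonempty
    rw [polyDim, direction_affineSpan, vectorSpan_add hγ.nonempty (Set.nonempty_finset_sum I hκ'),
      vectorSpan_finset_sum I hκ']
  have hunion : U I ⊔ U J = U (I ∪ J) := by
    simp only [U, sup_union, sup_sup_sup_comm, sup_idem]
  have hinter : U (I ∩ J) ≤ U I ⊓ U J :=
    le_inf (sup_le_sup_left (sup_mono inter_subset_left) _)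
      (sup_le_sup_left (sup_mono inter_subset_right) _)
  have hrank := finrank_add_finrank_sup_le_of_le_inf hinter
  have hcard := card_inter_add_card_union I J
  rw [hunion] at hrank
  simp only [deltaFn, hdim]
  omega

end Polytope

theorem SupClosed.isGreatest_of_maximal {α : Type*} [SemilatticeSup α] {s : Set α} {m : α}
    (hs : SupClosed s) (hm : Maximal (· ∈ s) m) : IsGreatest s m :=
  ⟨hm.prop, fun _ hx => le_sup_right.trans (hm.2 (hs hm.prop hx) le_sup_left)⟩

theorem existsUnique_maximal_and_le_of_isGreatest {α : Type*} [PartialOrder α] {P : α → Prop}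
    {a m : α} (h : IsGreatest {x | P x ∧ a ≤ x} m) : ∃! x, Maximal P x ∧ a ≤ x :=
  ⟨m, ⟨⟨h.1.1, fun _ hy hmy => h.2 ⟨hy, h.1.2.trans hmy⟩⟩, h.1.2⟩,
    fun _ ⟨hx, hax⟩ => hx.eq_of_le h.1.1 (h.2 ⟨hx.prop, hax⟩)⟩

section Submodular

variable {β : Type*} [Lattice β] {δ : β → ℤ}

theorem supClosed_setOf_eq_and_le (hδ : ∀ I J, δ (I ⊓ J) + δ (I ⊔ J) ≤ δ I + δ J)
    {a : β} {c : ℤ} (hc : ∀ K, a ≤ K → c ≤ δ K) : SupClosed {K | δ K = c ∧ a ≤ K} := by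
  rintro K ⟨hK, haK⟩ L ⟨hL, haL⟩
  have haKL : a ≤ K ⊔ L := haK.trans le_sup_left
  have := hδ K L
  have := hc _ (le_inf haK haL)
  have := hc _ haKL
  exact ⟨by omega, haKL⟩

theorem existsUnique_maximal_of_submodular [Finite β]
    (hδ : ∀ I J, δ (I ⊓ J) + δ (I ⊔ J) ≤ δ I + δ J) (h0 : ∀ K, 0 ≤ δ K) {J₀ J : β}
    (hJ₀ : δ J₀ = 0) (hJ₀max : ∀ K, δ K = 0 → K ≤ J₀) (hJ : δ J = 1) (hJJ₀ : ¬ J ≤ J₀) :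
    ∃! M, Maximal (fun K => δ K = 1 ∧ J₀ ≤ K) M ∧ J ≤ M := by
  have hone_le (K : β) (hJK : J ≤ K) : 1 ≤ δ K := by
    by_contra hK
    exact hJJ₀ (hJK.trans (hJ₀max K (by linarith [h0 K])))
  set S := {K | δ K = 1 ∧ J₀ ⊔ J ≤ K}
  have hS : SupClosed S := supClosed_setOf_eq_and_le hδ fun K h => hone_le K (le_sup_right.trans h)
  have hJ₀J : J₀ ⊔ J ∈ S := by
    have := hδ J₀ J
    have := h0 (J₀ ⊓ J)
    have := hone_le (J₀ ⊔ J) le_sup_right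
    exact ⟨by omega, le_rfl⟩
  obtain ⟨M, -, hM⟩ := exists_maximal_ge_of_wellFoundedGT (· ∈ S) _ hJ₀J
  apply existsUnique_maximal_and_le_of_isGreatest
  simpa only [S, sup_le_iff, and_assoc] using hS.isGreatest_of_maximal hM

end Submodular

/-- Suppose `δ(J) ≥ 0` for all `J`, `min_J δ(J) = 0`, and `J₀` is the
maximal element of `{J : δ(J) = 0}`.  Then any `J` with `δ(J) = 1` satisfies `J ⊆ J₀`, or
is contained in exactly one maximal element of `{J' : δ(J') = 1 ∧ J₀ ⊆ J'}`. -/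
theorem delta_one_containment {V : Type*} [AddCommGroup V] [Module ℝ V]
    (k : ℕ) (γ : Set V) (κ : Fin (k - 1) → Set V)
    (hγ : IsPolytope γ) (hκ : ∀ j, IsPolytope (κ j))
    (h0 : ∀ J : Finset (Fin (k - 1)), 0 ≤ deltaFn γ κ J)
    (J₀ : Finset (Fin (k - 1)))
    (hJ₀ : deltaFn γ κ J₀ = 0 ∧ ∀ J, deltaFn γ κ J = 0 → J ⊆ J₀)
    (J : Finset (Fin (k - 1))) (hJ : deltaFn γ κ J = 1) :
    J ⊆ J₀ ∨
      ∃! M : Finset (Fin (k - 1)),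
        ((deltaFn γ κ M = 1 ∧ J₀ ⊆ M) ∧
          ∀ M', deltaFn γ κ M' = 1 → J₀ ⊆ M' → M ⊆ M' → M = M') ∧ J ⊆ M := by
  by_cases hJJ₀ : J ⊆ J₀
  · exact Or.inl hJJ₀
  refine Or.inr ?_
  simpa only [maximal_iff, and_imp] using
    existsUnique_maximal_of_submodular (deltaFn_submodular hγ hκ) h0 hJ₀.1 hJ₀.2 hJ hJJ₀
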